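/- arXiv:math/9910124 — 2 statements merged into one kernel-verified Lean document; each statement's English description precedes it below -/
import Mathlib

section
/- For every rational number t, the rational number u = (t^12 - t^4 - 1)/(t^12 - t^8 - 1) has nonnegative 359-adic valuation, that is, u ∈ Z_{359}. -/
instance : Fact (Nat.Prime 359) := ⟨by norm_num⟩

lemma zmod_no_root : ∀ y : ZMod 359, y ^ 12 - y ^ 8 - 1 ≠ 0 := by set_option maxRecDepth 4000 in decide

lemma norm_den_eq_one {T : ℚ_[359]} (h : ‖T‖ ≤ 1) : ‖T ^ 12 - T ^ 8 - 1‖ = 1 := by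
  set z : ℤ_[359] := ⟨T, h⟩ with hz
  have hcoe : ((z ^ 12 - z ^ 8 - 1 : ℤ_[359]) : ℚ_[359]) = T ^ 12 - T ^ 8 - 1 := by
    push_cast [hz]; rfl
  rw [← hcoe, PadicInt.padic_norm_e_of_padicInt]
  refine le_antisymm (PadicInt.norm_le_one _) ?_
  by_contra hlt
  push_neg at hlt
  have hdvd : (359 : ℤ_[359]) ∣ (z ^ 12 - z ^ 8 - 1) :=
    (PadicInt.norm_lt_one_iff_dvd _).mp hlt
  have hmem : (z ^ 12 - z ^ 8 - 1) ∈ IsLocalRing.maximalIdeal ℤ_[359] := by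
    rw [PadicInt.maximalIdeal_eq_span_p, Ideal.mem_span_singleton]; exact hdvd
  have hker : PadicInt.toZMod (z ^ 12 - z ^ 8 - 1) = 0 := by
    rw [← RingHom.mem_ker, PadicInt.ker_toZMod]; exact hmem
  rw [map_sub, map_sub, map_pow, map_pow, map_one] at hker
  exact zmod_no_root (PadicInt.toZMod z) hker

/-- For every rational `t`, the number `u = (t^12 - t^4 - 1)/(t^12 - t^8 - 1)` has
nonnegative `359`-adic valuation, i.e. `u ∈ ℤ_{359}` (equivalently `‖u‖_{359} ≤ 1`). -/
theorem stmt4 (t : ℚ) :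
    ‖(((t ^ 12 - t ^ 4 - 1) / (t ^ 12 - t ^ 8 - 1) : ℚ) : ℚ_[359])‖ ≤ 1 := by
  set T : ℚ_[359] := (t : ℚ_[359]) with hT
  have hcast : (((t ^ 12 - t ^ 4 - 1) / (t ^ 12 - t ^ 8 - 1) : ℚ) : ℚ_[359])
      = (T ^ 12 - T ^ 4 - 1) / (T ^ 12 - T ^ 8 - 1) := by push_cast [hT]; ring
  rw [hcast, norm_div]
  rcases le_or_gt ‖T‖ 1 with h | h
  · -- denominator is a unit, numerator has norm ≤ 1
    rw [norm_den_eq_one h, div_one]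
    have h1 : ‖T ^ 12 - T ^ 4‖ ≤ 1 := by
      calc ‖T ^ 12 - T ^ 4‖ = ‖T ^ 12 + (-(T ^ 4))‖ := by ring_nf
        _ ≤ max ‖T ^ 12‖ ‖-(T ^ 4)‖ := Padic.nonarchimedean _ _
        _ ≤ 1 := by
            rw [norm_neg, norm_pow, norm_pow]
            exact max_le (pow_le_one₀ (norm_nonneg _) h) (pow_le_one₀ (norm_nonneg _) h)
    calc ‖T ^ 12 - T ^ 4 - 1‖ = ‖(T ^ 12 - T ^ 4) + (-1)‖ := by ring_nf
      _ ≤ max ‖T ^ 12 - T ^ 4‖ ‖(-1 : ℚ_[359])‖ := Padic.nonarchimedean _ _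
      _ ≤ 1 := by rw [norm_neg, norm_one]; exact max_le h1 le_rfl
  · -- ‖T‖ > 1 : denominator has norm ‖T‖^12, numerator ≤ ‖T‖^12
    have hp8 : ‖T‖ ^ 8 < ‖T‖ ^ 12 := pow_lt_pow_right₀ h (by norm_num)
    have hp4 : ‖T‖ ^ 4 < ‖T‖ ^ 12 := pow_lt_pow_right₀ h (by norm_num)
    have h1T : (1 : ℝ) < ‖T‖ ^ 12 := one_lt_pow₀ h (by norm_num)
    have hden1 : ‖T ^ 12 - T ^ 8‖ = ‖T‖ ^ 12 := by
      rw [sub_eq_add_neg, Padic.add_eq_max_of_ne, norm_neg, norm_pow, norm_pow,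
        max_eq_left hp8.le]
      rw [norm_neg, norm_pow, norm_pow]; exact hp8.ne'
    have hden : ‖T ^ 12 - T ^ 8 - 1‖ = ‖T‖ ^ 12 := by
      rw [sub_eq_add_neg, Padic.add_eq_max_of_ne, norm_neg, norm_one, hden1,
        max_eq_left h1T.le]
      rw [norm_neg, norm_one, hden1]; exact h1T.ne'
    have hnum : ‖T ^ 12 - T ^ 4 - 1‖ ≤ ‖T‖ ^ 12 := by
      calc ‖T ^ 12 - T ^ 4 - 1‖ = ‖(T ^ 12 + (-(T ^ 4))) + (-1)‖ := by ring_nf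
        _ ≤ max ‖T ^ 12 + (-(T ^ 4))‖ ‖(-1 : ℚ_[359])‖ := Padic.nonarchimedean _ _
        _ ≤ ‖T‖ ^ 12 := by
            refine max_le (le_trans (Padic.nonarchimedean _ _) ?_) ?_
            · rw [norm_neg, norm_pow, norm_pow]; exact max_le le_rfl hp4.le
            · rw [norm_neg, norm_one]; exact h1T.le
    rw [hden]
    exact div_le_one_of_le₀ hnum (by positivity)
end

section
/- There do not exist elements a1, a2, b1, b2, c1, c2, u in the algebraic closure of F_{359} such that the homogeneous cubic 5x^3 + 9y^3 + 10z^3 + 12u^3(x+y+z)^3 equals the product (5x + a1·y + a2·z)(x + b1·y + b2·z)(x + c1·y + c2·z) as polynomials. Consequently, for every u in F_{359}, the cubic 5x^3 + 9y^3 + 10z^3 + 12u^3(x+y+z)^3 does not factor into three linear forms over the algebraic closure of F_{359}. -/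
open MvPolynomial
local notation "K" => AlgebraicClosure (ZMod 359)
set_option maxHeartbeats 2000000

lemma nat_ne (n : ℕ) (h : (n : ZMod 359) ≠ 0) : (n : K) ≠ 0 := by
  intro h0
  apply h
  apply (algebraMap (ZMod 359) K).injective
  rw [map_natCast, h0, map_zero]

lemma sing (v x y z a1 b1 c1 a2 b2 c2 a3 b3 c3 : K)
    (H : ∀ X Y Z : K, 5*X^3+9*Y^3+10*Z^3+12*v^3*(X+Y+Z)^3
        = (a1*X+b1*Y+c1*Z)*(a2*X+b2*Y+c2*Z)*(a3*X+b3*Y+c3*Z))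
    (hL1 : a1*x+b1*y+c1*z = 0) (hL2 : a2*x+b2*y+c2*z = 0)
    (hnz : ¬(x = 0 ∧ y = 0 ∧ z = 0)) :
    x+y+z ≠ 0 ∧
    15*(72900-680400*v^3-465264*(v^3)^2)^2 + 41990400*v^3*(270+36*v^3)^2 = 0 ∧
    1080*(270+36*v^3)*x*(x+y+z)^3 = (x+y+z)^4*(72900-680400*v^3-465264*(v^3)^2) ∧
    1800*(450+1020*v^3)*y*(x+y+z)^3 = (x+y+z)^4*((450+1020*v^3)^2-1080000*v^3-2332800*(v^3)^2) ∧
    1080*(135+342*v^3)*z*(x+y+z)^3 = 2*(x+y+z)^4*((135+342*v^3)^2-87480*v^3-233280*(v^3)^2) := by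
  set w := v^3 with hwdef
  set s := x + y + z with hs
  have h12 : (12:K) ≠ 0 := nat_ne 12 (by decide)
  have q0 : 15*x^2 + 36*w*s^2 = 0 := by
    have h : (12:K)*(15*x^2 + 36*w*s^2) = 0 := by
      linear_combination (8 : K)*(H (x+1) y z) - (8 : K)*(H (x-1) y z)
        - (H (x+2) y z) + (H (x-2) y z)
        + (12*(a2*(a3*x+b3*y+c3*z)+a3*(a2*x+b2*y+c2*z)))*hL1
        + (12*(a1*(a3*x+b3*y+c3*z)))*hL2 + 432*w*(s+x+y+z)*hs
    exact (mul_eq_zero.mp h).resolve_left h12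
  have q1 : 27*y^2 + 36*w*s^2 = 0 := by
    have h : (12:K)*(27*y^2 + 36*w*s^2) = 0 := by
      linear_combination (8 : K)*(H x (y+1) z) - (8 : K)*(H x (y-1) z)
        - (H x (y+2) z) + (H x (y-2) z)
        + (12*(b2*(a3*x+b3*y+c3*z)+b3*(a2*x+b2*y+c2*z)))*hL1
        + (12*(b1*(a3*x+b3*y+c3*z)))*hL2 + 432*w*(s+x+y+z)*hs
    exact (mul_eq_zero.mp h).resolve_left h12
  have q2 : 30*z^2 + 36*w*s^2 = 0 := by
    have h : (12:K)*(30*z^2 + 36*w*s^2) = 0 := by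
      linear_combination (8 : K)*(H x y (z+1)) - (8 : K)*(H x y (z-1))
        - (H x y (z+2)) + (H x y (z-2))
        + (12*(c2*(a3*x+b3*y+c3*z)+c3*(a2*x+b2*y+c2*z)))*hL1
        + (12*(c1*(a3*x+b3*y+c3*z)))*hL2 + 432*w*(s+x+y+z)*hs
    exact (mul_eq_zero.mp h).resolve_left h12
  have hsne : s ≠ 0 := by
    intro h0
    apply hnz
    refine ⟨?_, ?_, ?_⟩
    · have hx2 : (15:K)*x^2 = 0 := by rw [h0] at q0; linear_combination q0
      have := (mul_eq_zero.mp hx2).resolve_left (nat_ne 15 (by decide))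
      exact pow_eq_zero_iff two_ne_zero |>.mp this
    · have hy2 : (27:K)*y^2 = 0 := by rw [h0] at q1; linear_combination q1
      have := (mul_eq_zero.mp hy2).resolve_left (nat_ne 27 (by decide))
      exact pow_eq_zero_iff two_ne_zero |>.mp this
    · have hz2 : (30:K)*z^2 = 0 := by rw [h0] at q2; linear_combination q2
      have := (mul_eq_zero.mp hz2).resolve_left (nat_ne 30 (by decide))
      exact pow_eq_zero_iff two_ne_zero |>.mp this
  have h1x : 2*y*z = (s-x)^2 - y^2 - z^2 := by linear_combination (-(s-x+y+z))*hs
  have h2x : 466560*w^2*s^4 = (270*(s-x)^2+684*w*s^2)^2 := by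
    linear_combination (72900*(2*y*z+((s-x)^2-y^2-z^2)))*h1x
      + (12960*w*s^2 - 10*(270*((s-x)^2-y^2-z^2)+(270*(s-x)^2+684*w*s^2)))*q1
      + (-(9720:K)*y^2 - 9*(270*((s-x)^2-y^2-z^2)+(270*(s-x)^2+684*w*s^2)))*q2
  have h3x : 1080*(270+36*w)*x*s^3 = s^4*(72900-680400*w-465264*w^2) := by
    linear_combination h2x + (29160*s^2+12960*w*s^2-19440*x*s+4860*x^2)*q0
  have h4 : s^8*(15*(72900-680400*w-465264*w^2)^2 + 41990400*w*(270+36*w)^2) = 0 := by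
    linear_combination (-(15:K)*(1080*(270+36*w)*x*s^3+s^4*(72900-680400*w-465264*w^2)))*h3x
      + (1166400*(270+36*w)^2*s^6)*q0
  have hE : 15*(72900-680400*w-465264*w^2)^2 + 41990400*w*(270+36*w)^2 = 0 := by
    rcases mul_eq_zero.mp h4 with h | h
    · exact absurd (pow_eq_zero_iff (by norm_num) |>.mp h) hsne
    · exact h
  have h1y : 2*x*z = (s-y)^2 - x^2 - z^2 := by linear_combination (-(s-y+x+z))*hs
  have h2y : 2332800*w^2*s^4 = (450*(s-y)^2+1620*w*s^2)^2 := by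
    linear_combination (202500*(2*x*z+((s-y)^2-x^2-z^2)))*h1y
      + (64800*w*s^2 - 30*(450*((s-y)^2-x^2-z^2)+(450*(s-y)^2+1620*w*s^2)))*q0
      + (-(27000:K)*x^2 - 15*(450*((s-y)^2-x^2-z^2)+(450*(s-y)^2+1620*w*s^2)))*q2
  have h3y : 1800*(450+1020*w)*y*s^3 = s^4*((450+1020*w)^2-1080000*w-2332800*w^2) := by
    linear_combination h2y + (45000*s^2+44000*w*s^2-30000*y*s+7500*y^2)*q1
  have h1z : 2*x*y = (s-z)^2 - x^2 - y^2 := by linear_combination (-(s-z+x+y))*hs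
  have h2z : 233280*w^2*s^4 = (135*(s-z)^2+504*w*s^2)^2 := by
    linear_combination (18225*(2*x*y+((s-z)^2-x^2-y^2)))*h1z
      + (6480*w*s^2 - 9*(135*((s-z)^2-x^2-y^2)+(135*(s-z)^2+504*w*s^2)))*q0
      + (-(2700:K)*x^2 - 5*(135*((s-z)^2-x^2-y^2)+(135*(s-z)^2+504*w*s^2)))*q1
  have h3z : 1080*(135+342*w)*z*s^3 = 2*s^4*((135+342*w)^2-87480*w-233280*w^2) := by
    linear_combination 2*h2z + (7290*s^2+7614*w*s^2-4860*z*s+1215*z^2)*q2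
  exact ⟨hsne, hE, h3x, h3y, h3z⟩

lemma kerpt (a1 b1 c1 a2 b2 c2 : K) :
    ∃ x y z : K, ¬(x = 0 ∧ y = 0 ∧ z = 0) ∧ a1*x+b1*y+c1*z = 0 ∧ a2*x+b2*y+c2*z = 0 := by
  by_cases hm1 : b1*c2 - c1*b2 = 0
  · by_cases hm2 : c1*a2 - a1*c2 = 0
    · by_cases hm3 : a1*b2 - b1*a2 = 0
      · by_cases ha1 : a1 = 0
        · by_cases hb1 : b1 = 0
          · by_cases hc1 : c1 = 0
            · -- l1 = 0
              by_cases ha2 : a2 = 0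
              · by_cases hb2 : b2 = 0
                · by_cases hc2 : c2 = 0
                  · exact ⟨1, 0, 0, fun h => one_ne_zero h.1, by rw [ha1,hb1,hc1]; ring,
                      by rw [ha2,hb2,hc2]; ring⟩
                  · exact ⟨0, -c2, b2, fun h => hc2 (by linear_combination -h.2.1),
                      by rw [ha1,hb1,hc1]; ring, by ring⟩
                · exact ⟨-b2, a2, 0, fun h => hb2 (by linear_combination -h.1),
                    by rw [ha1,hb1,hc1]; ring, by ring⟩
              · exact ⟨-b2, a2, 0, fun h => ha2 h.2.1, by rw [ha1,hb1,hc1]; ring, by ring⟩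
            · exact ⟨0, -c1, b1, fun h => hc1 (by linear_combination -h.2.1),
                by ring, by linear_combination hm1⟩
          · exact ⟨-b1, a1, 0, fun h => hb1 (by linear_combination -h.1),
              by ring, by linear_combination hm3⟩
        · exact ⟨-b1, a1, 0, fun h => ha1 h.2.1, by ring, by linear_combination hm3⟩
      · exact ⟨b1*c2 - c1*b2, c1*a2 - a1*c2, a1*b2 - b1*a2, fun h => hm3 h.2.2,
          by ring, by ring⟩
    · exact ⟨b1*c2 - c1*b2, c1*a2 - a1*c2, a1*b2 - b1*a2, fun h => hm2 h.2.1,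
        by ring, by ring⟩
  · exact ⟨b1*c2 - c1*b2, c1*a2 - a1*c2, a1*b2 - b1*a2, fun h => hm1 h.1, by ring, by ring⟩

lemma core (v a1 b1 c1 a2 b2 c2 a3 b3 c3 : K)
    (H : ∀ X Y Z : K, 5*X^3+9*Y^3+10*Z^3+12*v^3*(X+Y+Z)^3
        = (a1*X+b1*Y+c1*Z)*(a2*X+b2*Y+c2*Z)*(a3*X+b3*Y+c3*Z)) : False := by
  obtain ⟨x1,y1,z1,hnz1,hP1L1,hP1L2⟩ := kerpt a1 b1 c1 a2 b2 c2
  obtain ⟨x2,y2,z2,hnz2,hP2L2,hP2L3⟩ := kerpt a2 b2 c2 a3 b3 c3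
  have H23 : ∀ X Y Z : K, 5*X^3+9*Y^3+10*Z^3+12*v^3*(X+Y+Z)^3
      = (a2*X+b2*Y+c2*Z)*(a3*X+b3*Y+c3*Z)*(a1*X+b1*Y+c1*Z) := fun X Y Z => by
    linear_combination H X Y Z
  obtain ⟨hs1,hE,e1x,e1y,e1z⟩ := sing v x1 y1 z1 a1 b1 c1 a2 b2 c2 a3 b3 c3 H hP1L1 hP1L2 hnz1
  obtain ⟨hs2,-,e2x,e2y,e2z⟩ := sing v x2 y2 z2 a2 b2 c2 a3 b3 c3 a1 b1 c1 H23 hP2L2 hP2L3 hnz2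
  have hcx : (270:K)+36*v^3 ≠ 0 := by
    intro hc
    have hR : ((11105581261691289600000 : ℕ) : K) = 0 := by
      push_cast
      linear_combination (1679616:K)*hE - (- (41131286552482560000:K)
        + (5493957265322496000:K)*v^3 - (690581257439846400:K)*(v^3)^2
        + (151494777492848640:K)*(v^3)^3)*hc
    exact nat_ne _ (by decide) hR
  have hcy : (450:K)+1020*v^3 ≠ 0 := by
    intro hc
    have hR : ((1057916215296000000000 : ℕ) : K) = 0 := by
      push_cast
      linear_combination (1082432160000:K)*hE - ((189398684924640000000:K)
        + (3354555281828544000000:K)*v^3 + (8615801692824192000000:K)*(v^3)^2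
        + (3445804823251691520000:K)*(v^3)^3)*hc
    exact nat_ne _ (by decide) hR
  have hcz : (135:K)+342*v^3 ≠ 0 := by
    intro hc
    have hR : ((10845294200870400000 : ℕ) : K) = 0 := by
      push_cast
      linear_combination (13680577296:K)*hE - ((7997908574916000000:K)
        + (139149314937176256000:K)*v^3 + (330800142041759001600:K)*(v^3)^2
        + (129887834852931102720:K)*(v^3)^3)*hc
    exact nat_ne _ (by decide) hR
  have hx12 : x1*(x2+y2+z2) = x2*(x1+y1+z1) := by
    have key : (1080*((270:K)+36*v^3)*(x1+y1+z1)^3*(x2+y2+z2)^3)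
        * (x1*(x2+y2+z2) - x2*(x1+y1+z1)) = 0 := by
      linear_combination (x2+y2+z2)^4*e1x - (x1+y1+z1)^4*e2x
    have hne : (1080*((270:K)+36*v^3)*(x1+y1+z1)^3*(x2+y2+z2)^3) ≠ 0 :=
      mul_ne_zero (mul_ne_zero (mul_ne_zero (nat_ne 1080 (by decide)) hcx)
        (pow_ne_zero _ hs1)) (pow_ne_zero _ hs2)
    have := (mul_eq_zero.mp key).resolve_left hne
    exact sub_eq_zero.mp this
  have hy12 : y1*(x2+y2+z2) = y2*(x1+y1+z1) := by
    have key : (1800*((450:K)+1020*v^3)*(x1+y1+z1)^3*(x2+y2+z2)^3)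
        * (y1*(x2+y2+z2) - y2*(x1+y1+z1)) = 0 := by
      linear_combination (x2+y2+z2)^4*e1y - (x1+y1+z1)^4*e2y
    have hne : (1800*((450:K)+1020*v^3)*(x1+y1+z1)^3*(x2+y2+z2)^3) ≠ 0 :=
      mul_ne_zero (mul_ne_zero (mul_ne_zero (nat_ne 1800 (by decide)) hcy)
        (pow_ne_zero _ hs1)) (pow_ne_zero _ hs2)
    exact sub_eq_zero.mp ((mul_eq_zero.mp key).resolve_left hne)
  have hz12 : z1*(x2+y2+z2) = z2*(x1+y1+z1) := by
    have key : (1080*((135:K)+342*v^3)*(x1+y1+z1)^3*(x2+y2+z2)^3)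
        * (z1*(x2+y2+z2) - z2*(x1+y1+z1)) = 0 := by
      linear_combination (x2+y2+z2)^4*e1z - (x1+y1+z1)^4*e2z
    have hne : (1080*((135:K)+342*v^3)*(x1+y1+z1)^3*(x2+y2+z2)^3) ≠ 0 :=
      mul_ne_zero (mul_ne_zero (mul_ne_zero (nat_ne 1080 (by decide)) hcz)
        (pow_ne_zero _ hs1)) (pow_ne_zero _ hs2)
    exact sub_eq_zero.mp ((mul_eq_zero.mp key).resolve_left hne)
  have hL3 : a3*x1+b3*y1+c3*z1 = 0 := by
    have key : (x2+y2+z2)*(a3*x1+b3*y1+c3*z1) = 0 := by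
      linear_combination a3*hx12 + b3*hy12 + c3*hz12 + (x1+y1+z1)*hP2L3
    exact (mul_eq_zero.mp key).resolve_left hs2
  have r0 : 30*x1+72*v^3*(x1+y1+z1) = 0 := by
    linear_combination H (x1+1) y1 z1 + H (x1-1) y1 z1 - 2*(H x1 y1 z1)
      + 2*a2*a3*hP1L1 + 2*a1*a3*hP1L2 + 2*a1*a2*hL3
  have r1 : 54*y1+72*v^3*(x1+y1+z1) = 0 := by
    linear_combination H x1 (y1+1) z1 + H x1 (y1-1) z1 - 2*(H x1 y1 z1)
      + 2*b2*b3*hP1L1 + 2*b1*b3*hP1L2 + 2*b1*b2*hL3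
  have r2 : 60*z1+72*v^3*(x1+y1+z1) = 0 := by
    linear_combination H x1 y1 (z1+1) + H x1 y1 (z1-1) - 2*(H x1 y1 z1)
      + 2*c2*c3*hP1L1 + 2*c1*c3*hP1L2 + 2*c1*c2*hL3
  have hconc : ((540:K)+2664*v^3)*(x1+y1+z1) = 0 := by
    linear_combination 18*r0+10*r1+9*r2
  have h540 : (540:K)+2664*v^3 = 0 := (mul_eq_zero.mp hconc).resolve_right hs1
  have hR : ((1821315326917371494400000 : ℕ) : K) = 0 := by
    push_cast
    linear_combination ((10807951080865720320000:K)
      + (93400967753906245632000:K)*v^3 + (168136017372648824832000:K)*(v^3)^2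
      + (61389319714762097295360:K)*(v^3)^3)*h540 - (50365932834816:K)*hE
  exact nat_ne _ (by decide) hR

lemma decomp (l : MvPolynomial (Fin 3) K) (hl : l.IsHomogeneous 1) :
    ∃ a b c : K, ∀ x y z : K, eval ![x,y,z] l = a*x+b*y+c*z := by
  refine ⟨coeff (Finsupp.single 0 1) l, coeff (Finsupp.single 1 1) l,
    coeff (Finsupp.single 2 1) l, fun x y z => ?_⟩
  have hsub : l.support ⊆ {Finsupp.single 0 1, Finsupp.single 1 1, Finsupp.single 2 1} := by
    intro m hm
    have hc := mem_support_iff.mp hm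
    have hdeg := hl hc
    unfold Finsupp.weight at hdeg
    simp [Finsupp.linearCombination, Finsupp.sum] at hdeg
    rw [Finset.sum_subset (Finset.subset_univ m.support)] at hdeg
    swap
    · intro i _ hi
      exact Finsupp.notMem_support_iff.mp hi
    rw [Fin.sum_univ_three] at hdeg
    simp only [Finset.mem_insert, Finset.mem_singleton]
    have h0 : m 0 = 1 ∧ m 1 = 0 ∧ m 2 = 0 ∨ m 0 = 0 ∧ m 1 = 1 ∧ m 2 = 0 ∨
        m 0 = 0 ∧ m 1 = 0 ∧ m 2 = 1 := by omega
    rcases h0 with ⟨h0,h1,h2⟩|⟨h0,h1,h2⟩|⟨h0,h1,h2⟩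
    · left
      ext j; fin_cases j <;> simp [h0, h1, h2, Finsupp.single_apply]
    · right; left
      ext j; fin_cases j <;> simp [h0, h1, h2, Finsupp.single_apply]
    · right; right
      ext j; fin_cases j <;> simp [h0, h1, h2, Finsupp.single_apply]
  conv_lhs => rw [l.as_sum]
  rw [map_sum, Finset.sum_subset hsub ?_]
  · have hne01 : (Finsupp.single 0 1 : Fin 3 →₀ ℕ) ≠ Finsupp.single 1 1 := by
      intro h; simpa using DFunLike.congr_fun h 0
    have hne02 : (Finsupp.single 0 1 : Fin 3 →₀ ℕ) ≠ Finsupp.single 2 1 := by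
      intro h; simpa using DFunLike.congr_fun h 0
    have hne12 : (Finsupp.single 1 1 : Fin 3 →₀ ℕ) ≠ Finsupp.single 2 1 := by
      intro h; simpa using DFunLike.congr_fun h 1
    rw [Finset.sum_insert (by simp [hne01, hne02]), Finset.sum_insert (by simp [hne12]),
      Finset.sum_singleton]
    simp only [eval_monomial, Finsupp.prod_single_index, pow_zero, pow_one]
    simp [Matrix.cons_val_zero, Matrix.cons_val_one, Matrix.head_cons]
    ring
  · intro m _ hm
    rw [notMem_support_iff.mp hm, monomial_zero, map_zero]


/-- There are no `a₁, a₂, b₁, b₂, c₁, c₂, u` in the algebraic closure of `𝔽₃₅₉` such that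
`5x³ + 9y³ + 10z³ + 12u³(x+y+z)³ = (5x + a₁y + a₂z)(x + b₁y + b₂z)(x + c₁y + c₂z)`.
Consequently, for every `u ∈ 𝔽₃₅₉`, this cubic does not factor into three linear forms
over the algebraic closure of `𝔽₃₅₉`. -/
theorem stmt13 :
    (¬ ∃ a₁ a₂ b₁ b₂ c₁ c₂ u : K,
      (C 5 * X 0 ^ 3 + C 9 * X 1 ^ 3 + C 10 * X 2 ^ 3 +
          C 12 * C u ^ 3 * (X 0 + X 1 + X 2) ^ 3 : MvPolynomial (Fin 3) K) =
        (C 5 * X 0 + C a₁ * X 1 + C a₂ * X 2) *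
        (X 0 + C b₁ * X 1 + C b₂ * X 2) *
        (X 0 + C c₁ * X 1 + C c₂ * X 2)) ∧
    ∀ u : ZMod 359,
      ¬ ∃ l₁ l₂ l₃ : MvPolynomial (Fin 3) K,
        l₁.IsHomogeneous 1 ∧ l₂.IsHomogeneous 1 ∧ l₃.IsHomogeneous 1 ∧
        (C 5 * X 0 ^ 3 + C 9 * X 1 ^ 3 + C 10 * X 2 ^ 3 +
            C 12 * C (algebraMap (ZMod 359) K u) ^ 3 * (X 0 + X 1 + X 2) ^ 3
          : MvPolynomial (Fin 3) K) = l₁ * l₂ * l₃ := by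
  constructor
  · rintro ⟨a₁, a₂, b₁, b₂, c₁, c₂, u, heq⟩
    refine core u 5 a₁ a₂ 1 b₁ b₂ 1 c₁ c₂ (fun x y z => ?_)
    have h := congrArg (eval ![x,y,z]) heq
    simp only [map_add, map_mul, map_pow, eval_C, eval_X, Matrix.cons_val_zero,
      Matrix.cons_val_one, Matrix.head_cons, Matrix.cons_val_two, Matrix.tail_cons] at h
    linear_combination h
  · rintro u ⟨l₁, l₂, l₃, hl₁, hl₂, hl₃, heq⟩
    obtain ⟨a1, b1, c1, d1⟩ := decomp l₁ hl₁
    obtain ⟨a2, b2, c2, d2⟩ := decomp l₂ hl₂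
    obtain ⟨a3, b3, c3, d3⟩ := decomp l₃ hl₃
    refine core (algebraMap (ZMod 359) K u) a1 b1 c1 a2 b2 c2 a3 b3 c3 (fun x y z => ?_)
    have h := congrArg (eval ![x,y,z]) heq
    simp only [map_add, map_mul, map_pow, eval_C, eval_X, Matrix.cons_val_zero,
      Matrix.cons_val_one, Matrix.head_cons, Matrix.cons_val_two, Matrix.tail_cons] at h
    rw [d1 x y z, d2 x y z, d3 x y z] at h
    linear_combination h
end
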